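/- Let X_1,…,X_n and Y be random variables taking values in finite nonempty sets, with strictly positive joint probability mass function p(y, x) on B × (A_1 × ⋯ × A_n). For each k ∈ {1,…,n} let S(k) and B(k) be disjoint subsets of {1,…,k−1} with pa(k) = S(k) ∪ B(k), and assume the marginal of (X_1,…,X_n) factorizes along the DAG: p(x) = ∏_{k=1}^n p(x_k | x_{pa(k)}) for all x. Define q(x) := ∏_{k=1}^n p(x_k | x_{S(k)}). Then ∑_{y,x} p(y,x) log( p(y,x) / ( p(y) q(x) ) ) = I( Y ; (X_1,…,X_n) ) + ∑_{k=1}^n I( X_k ; (X_u : u ∈ B(k)) | (X_u : u ∈ S(k)) ), where I denotes (conditional) mutual information. -/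

import Mathlib

open Finset

/-! Splitting `log (p / (p_Y q))` as `log (p / (p_Y p_X)) + log (p_X / q)` separates the mutual
information `I(Y; X)` from the relative entropy `D(p_X ‖ q)`. Dividing the DAG factorization of
`p_X` by that of `q` factor by factor, `p_X / q` is a product over `k` of ratios
`p(x_k, x_{pa k}) p(x_{S k}) / (p(x_k, x_{S k}) p(x_{pa k}))`, so `D(p_X ‖ q)` is the sum of the
expectations of their logarithms, i.e. of the conditional mutual informations. -/

def marg {n : ℕ} {A : Fin n → Type*} [∀ i, Fintype (A i)] [∀ i, DecidableEq (A i)]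
    (p : (∀ i, A i) → ℝ) (S : Finset (Fin n)) (x : ∀ i, A i) : ℝ :=
  ∑ y : ∀ i, A i, if ∀ i ∈ S, y i = x i then p y else 0

section Marginal

variable {n : ℕ} {A : Fin n → Type*} [∀ i, Fintype (A i)] [∀ i, DecidableEq (A i)]

theorem le_marg {p : (∀ i, A i) → ℝ} (hp : ∀ x, 0 ≤ p x) (S : Finset (Fin n))
    (x : ∀ i, A i) : p x ≤ marg p S x := by
  have hterm : ∀ y, 0 ≤ if ∀ i ∈ S, y i = x i then p y else 0 := fun y => by
    split_ifs
    exacts [hp y, le_rfl]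
  simpa [marg] using single_le_sum (fun y _ => hterm y) (mem_univ x)

theorem marg_pos {p : (∀ i, A i) → ℝ} (hp : ∀ x, 0 < p x) (S : Finset (Fin n))
    (x : ∀ i, A i) : 0 < marg p S x :=
  (hp x).trans_le (le_marg (fun y => (hp y).le) S x)

end Marginal

theorem sum_mul_log_div_mul_eq_add_sum_mul_log_div {α β : Type*} [Fintype α] [Fintype β]
    {p : β → α → ℝ} (hp : ∀ y x, 0 < p y x) {m : α → ℝ} (hm : ∀ x, m x = ∑ y, p y x)
    {q : α → ℝ} (hq : ∀ x, 0 < q x) :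
    ∑ y, ∑ x, p y x * Real.log (p y x / ((∑ x', p y x') * q x))
      = ∑ y, ∑ x, p y x * Real.log (p y x / ((∑ x', p y x') * m x))
        + ∑ x, m x * Real.log (m x / q x) := by
  have hsplit : ∀ y x, Real.log (p y x / ((∑ x', p y x') * q x))
      = Real.log (p y x / ((∑ x', p y x') * m x)) + Real.log (m x / q x) := by
    intro y x
    have hpy : 0 < ∑ x', p y x' :=
      (hp y x).trans_le (single_le_sum (fun x' _ => (hp y x').le) (mem_univ x))
    have hmx : 0 < m x :=
      hm x ▸ (hp y x).trans_le (single_le_sum (fun y' _ => (hp y' x).le) (mem_univ y))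
    rw [← Real.log_mul (div_pos (hp y x) (mul_pos hpy hmx)).ne' (div_pos hmx (hq x)).ne']
    congr 1
    field_simp
  simp_rw [hsplit, mul_add, sum_add_distrib, add_right_inj]
  rw [sum_comm]
  simp_rw [← sum_mul, ← hm]

theorem decoding_info_eq_mutualInfo_add_sum_condMutualInfo_general
    {n : ℕ} {B : Type*} [Fintype B] [Nonempty B]
    {A : Fin n → Type*} [∀ i, Fintype (A i)] [∀ i, DecidableEq (A i)]
    (p : B → (∀ i, A i) → ℝ) (hpos : ∀ y x, 0 < p y x)
    (S Bk : Fin n → Finset (Fin n))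
    (pX : (∀ i, A i) → ℝ) (hpX : ∀ x, pX x = ∑ y, p y x)
    (hfact : ∀ x, pX x =
      ∏ k, marg pX (insert k (S k ∪ Bk k)) x / marg pX (S k ∪ Bk k) x)
    (q : (∀ i, A i) → ℝ)
    (hq : ∀ x, q x = ∏ k, marg pX (insert k (S k)) x / marg pX (S k) x) :
    ∑ y, ∑ x, p y x * Real.log (p y x / ((∑ x', p y x') * q x))
      = (∑ y, ∑ x, p y x * Real.log (p y x / ((∑ x', p y x') * pX x)))
        + ∑ k, ∑ x, pX x * Real.log
            ((marg pX (insert k (S k ∪ Bk k)) x * marg pX (S k) x)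
              / (marg pX (insert k (S k)) x * marg pX (S k ∪ Bk k) x)) := by
  have hpXpos : ∀ x, 0 < pX x := fun x =>
    hpX x ▸ sum_pos (fun y _ => hpos y x) univ_nonempty
  have hm : ∀ T x, 0 < marg pX T x := marg_pos hpXpos
  have hqpos : ∀ x, 0 < q x := fun x =>
    hq x ▸ prod_pos fun k _ => div_pos (hm _ x) (hm _ x)
  have hlog : ∀ x, Real.log (pX x / q x) = ∑ k, Real.log
      ((marg pX (insert k (S k ∪ Bk k)) x * marg pX (S k) x)
        / (marg pX (insert k (S k)) x * marg pX (S k ∪ Bk k) x)) := fun x => by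
    rw [hfact x, hq x, ← prod_div_distrib, Real.log_prod fun k _ =>
      (div_pos (div_pos (hm _ x) (hm _ x)) (div_pos (hm _ x) (hm _ x))).ne']
    refine sum_congr rfl fun k _ => ?_
    rw [div_div_div_eq, mul_comm (marg pX (S k ∪ Bk k) x)]
  rw [sum_mul_log_div_mul_eq_add_sum_mul_log_div hpos hpX hqpos, add_right_inj, sum_comm]
  simp_rw [hlog, mul_sum]

/-- equation (13) of the paper.
Let `X_1, …, X_n` and `Y` have strictly positive joint pmf `p y x` on
`B × (A 1 × ⋯ × A n)`.  For each `k` let `S k` and `Bk k` be disjoint subsets of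
`{1, …, k-1}` with `pa k = S k ∪ Bk k`, and assume the marginal `pX` of
`(X_1, …, X_n)` factorizes along the DAG: `pX x = ∏ k, pX(x_k | x_{pa k})`.
With `q x := ∏ k, pX(x_k | x_{S k})`, one has
`∑ p(y,x) log (p(y,x) / (p(y) q(x))) = I(Y; X_1, …, X_n) + ∑ k, I(X_k; X_{Bk k} | X_{S k})`,
where `I(Y;X) = ∑ p(y,x) log (p(y,x) / (p(y) p(x)))` and conditional mutual
information is written via marginal pmfs. -/
theorem decoding_info_eq_mutualInfo_add_sum_condMutualInfo
    {n : ℕ} {B : Type*} [Fintype B] [Nonempty B]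
    {A : Fin n → Type*} [∀ i, Fintype (A i)] [∀ i, DecidableEq (A i)]
    [∀ i, Nonempty (A i)]
    (p : B → (∀ i, A i) → ℝ) (hpos : ∀ y x, 0 < p y x)
    (hsum : ∑ y, ∑ x, p y x = 1)
    (S Bk : Fin n → Finset (Fin n))
    (hS : ∀ k, ∀ u ∈ S k, u < k) (hB : ∀ k, ∀ u ∈ Bk k, u < k)
    (hdisj : ∀ k, Disjoint (S k) (Bk k))
    (pX : (∀ i, A i) → ℝ) (hpX : ∀ x, pX x = ∑ y, p y x)
    (hfact : ∀ x, pX x =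
      ∏ k, marg pX (insert k (S k ∪ Bk k)) x / marg pX (S k ∪ Bk k) x)
    (q : (∀ i, A i) → ℝ)
    (hq : ∀ x, q x = ∏ k, marg pX (insert k (S k)) x / marg pX (S k) x) :
    ∑ y, ∑ x, p y x * Real.log (p y x / ((∑ x', p y x') * q x))
      = (∑ y, ∑ x, p y x * Real.log (p y x / ((∑ x', p y x') * pX x)))
        + ∑ k, ∑ x, pX x * Real.log
            ((marg pX (insert k (S k ∪ Bk k)) x * marg pX (S k) x)
              / (marg pX (insert k (S k)) x * marg pX (S k ∪ Bk k) x)) :=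
  decoding_info_eq_mutualInfo_add_sum_condMutualInfo_general p hpos S Bk pX hpX hfact q hq
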